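/- arXiv:0812.0045 — 2 statements merged into one kernel-verified Lean document; each statement's English description precedes it below -/
import Mathlib

section
/- Define G = {(A,θ₁,θ₂) ∈ U(2,1) × ℝ × ℝ : θ₁ ≡ arg(det A) mod 2π and θ₂ ≡ arg(a₃₃) mod 2π} with multiplication (A,θ₁,θ₂)(B,φ₁,φ₂) = (AB, θ₁+φ₁, θ₂+φ₂+arg(1 + (a₃₁b₁₃ + a₃₂b₂₃)/(a₃₃b₃₃))), where arg takes values in (−π/2,π/2) in the last term. Then the multiplication is well-defined, i.e., the product again lies in G: its third coordinate is congruent mod 2π to the argument of the (3,3) entry of AB. -/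
noncomputable section

open Matrix Complex

/-- J = diag(1,1,-1). -/
def J21 : Matrix (Fin 3) (Fin 3) ℂ := Matrix.diagonal ![1, 1, -1]

/-- A ∈ U(2,1): J A† J is a two-sided inverse of A, i.e. J Aᴴ J = A⁻¹. -/
def inU21 (A : Matrix (Fin 3) (Fin 3) ℂ) : Prop :=
  A * (J21 * Aᴴ * J21) = 1 ∧ (J21 * Aᴴ * J21) * A = 1

/-- Membership in the universal covering group G of U(2,1). -/
def inG (A : Matrix (Fin 3) (Fin 3) ℂ) (θ₁ θ₂ : ℝ) : Prop :=
  inU21 A ∧ (∃ k : ℤ, θ₁ = (A.det).arg + 2 * Real.pi * k) ∧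
    (∃ k : ℤ, θ₂ = (A 2 2).arg + 2 * Real.pi * k)

lemma J21_mul_J21 : J21 * J21 = 1 := by
  ext i j
  fin_cases i <;> fin_cases j <;>
    simp [J21, Matrix.mul_apply, Fin.sum_univ_three, Matrix.one_apply]

lemma inU21_mul {A B : Matrix (Fin 3) (Fin 3) ℂ} (hA : inU21 A) (hB : inU21 B) :
    inU21 (A * B) := by
  have key : J21 * (A * B)ᴴ * J21 = (J21 * Bᴴ * J21) * (J21 * Aᴴ * J21) := by
    rw [conjTranspose_mul]
    calc J21 * (Bᴴ * Aᴴ) * J21 = J21 * Bᴴ * (J21 * J21) * (Aᴴ * J21) := by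
          rw [J21_mul_J21]; noncomm_ring
      _ = _ := by noncomm_ring
  constructor
  · rw [key]
    calc (A * B) * ((J21 * Bᴴ * J21) * (J21 * Aᴴ * J21))
        = A * ((B * (J21 * Bᴴ * J21)) * (J21 * Aᴴ * J21)) := by noncomm_ring
      _ = 1 := by rw [hB.1, Matrix.one_mul]; exact hA.1
  · rw [key]
    calc ((J21 * Bᴴ * J21) * (J21 * Aᴴ * J21)) * (A * B)
        = (J21 * Bᴴ * J21) * (((J21 * Aᴴ * J21) * A) * B) := by noncomm_ring
      _ = 1 := by rw [hA.2, Matrix.one_mul]; exact hB.2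

lemma entry33_ne {A : Matrix (Fin 3) (Fin 3) ℂ} (h : inU21 A) : A 2 2 ≠ 0 := by
  have h1 := congrFun (congrFun h.1 2) 2
  simp only [Matrix.mul_apply, J21, Matrix.one_apply, Fin.sum_univ_three, Matrix.diagonal,
    conjTranspose_apply] at h1
  simp [mul_comm, mul_left_comm, Complex.mul_conj] at h1
  intro h0
  rw [h0] at h1
  simp at h1
  have h2 := congrArg Complex.re h1
  simp at h2
  nlinarith [Complex.normSq_nonneg (A 2 0), Complex.normSq_nonneg (A 2 1)]

lemma det_ne {A : Matrix (Fin 3) (Fin 3) ℂ} (h : inU21 A) : A.det ≠ 0 := by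
  have := congrArg Matrix.det h.1
  rw [Matrix.det_mul, Matrix.det_one] at this
  exact left_ne_zero_of_mul_eq_one this

theorem stmt7 (A B : Matrix (Fin 3) (Fin 3) ℂ) (θ₁ θ₂ φ₁ φ₂ : ℝ)
    (hA : inG A θ₁ θ₂) (hB : inG B φ₁ φ₂) :
    inG (A * B) (θ₁ + φ₁)
      (θ₂ + φ₂ + (1 + (A 2 0 * B 0 2 + A 2 1 * B 1 2) / (A 2 2 * B 2 2)).arg) := by
  obtain ⟨hAU, ⟨k1, hk1⟩, ⟨k2, hk2⟩⟩ := hA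
  obtain ⟨m1', ⟨m1, hm1⟩, ⟨m2, hm2⟩⟩ := hB
  rename' m1' => hBU
  have hABU : inU21 (A * B) := inU21_mul hAU hBU
  refine ⟨hABU, ?_, ?_⟩
  · have hda := det_ne hAU
    have hdb := det_ne hBU
    have h := Complex.arg_mul_coe_angle hda hdb
    rw [← Matrix.det_mul, ← Real.Angle.coe_add,
      Real.Angle.angle_eq_iff_two_pi_dvd_sub] at h
    obtain ⟨k, hk⟩ := h
    refine ⟨k1 + m1 - k, ?_⟩
    push_cast
    linarith
  · have hA33 := entry33_ne hAU
    have hB33 := entry33_ne hBU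
    have hAB33 := entry33_ne hABU
    set z := 1 + (A 2 0 * B 0 2 + A 2 1 * B 1 2) / (A 2 2 * B 2 2) with hz_def
    have hfac : (A * B) 2 2 = A 2 2 * B 2 2 * z := by
      rw [hz_def]
      have : (A * B) 2 2 = A 2 0 * B 0 2 + A 2 1 * B 1 2 + A 2 2 * B 2 2 := by
        simp [Matrix.mul_apply, Fin.sum_univ_three]
      rw [this]
      field_simp
      ring
    have hz : z ≠ 0 := by
      intro h0
      rw [h0, mul_zero] at hfac
      exact hAB33 hfac
    have h1 := Complex.arg_mul_coe_angle (mul_ne_zero hA33 hB33) hz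
    rw [← hfac, Complex.arg_mul_coe_angle hA33 hB33] at h1
    rw [← Real.Angle.coe_add, ← Real.Angle.coe_add,
      Real.Angle.angle_eq_iff_two_pi_dvd_sub] at h1
    obtain ⟨k, hk⟩ := h1
    refine ⟨k2 + m2 - k, ?_⟩
    push_cast
    linarith
end
end

section
/- For A, B ∈ U(2,1), the quantity 1 + (a₃₁b₁₃ + a₃₂b₂₃)/(a₃₃b₃₃) has positive real part; equivalently |a₃₁b₁₃ + a₃₂b₂₃| < |a₃₃b₃₃|. -/
noncomputable section

open Matrix Complex

/-! The last row of `A` and the last column of `B` lie on the hyperboloid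
`|z₀|² + |z₁|² - |z₂|² = -1`; Cauchy–Schwarz for the vectors `(|a₃₁|, |a₃₂|, 1)` and
`(|b₁₃|, |b₂₃|, 1)` then gives `|a₃₁||b₁₃| + |a₃₂||b₂₃| + 1 ≤ |a₃₃||b₃₃|`. -/

theorem mul_add_mul_lt_mul_of_sq_eq_one_add {x₀ x₁ y₀ y₁ a b : ℝ}
    (ha : a ^ 2 = 1 + x₀ ^ 2 + x₁ ^ 2) (hb : b ^ 2 = 1 + y₀ ^ 2 + y₁ ^ 2)
    (ha₀ : 0 ≤ a) (hb₀ : 0 ≤ b) : x₀ * y₀ + x₁ * y₁ < a * b := by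
  have cauchySchwarz : (x₀ * y₀ + x₁ * y₁ + 1) ^ 2 ≤ (a * b) ^ 2 := by
    rw [mul_pow, ha, hb]
    nlinarith [sq_nonneg (x₀ * y₁ - x₁ * y₀), sq_nonneg (x₀ - y₀), sq_nonneg (x₁ - y₁)]
  linarith [abs_le_of_sq_le_sq' cauchySchwarz (mul_nonneg ha₀ hb₀)]

theorem Complex.re_one_add_div_pos_of_norm_lt {s t : ℂ} (h : ‖s‖ < ‖t‖) :
    0 < (1 + s / t).re := by
  have hst : ‖s / t‖ < 1 := by
    rwa [norm_div, div_lt_one ((norm_nonneg s).trans_lt h)]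
  rw [add_re, one_re]
  linarith [neg_abs_le (s / t).re, abs_re_le_norm (s / t)]

namespace inU21

variable {A : Matrix (Fin 3) (Fin 3) ℂ}

theorem norm_sq_row_two (hA : inU21 A) :
    ‖A 2 2‖ ^ 2 = 1 + ‖A 2 0‖ ^ 2 + ‖A 2 1‖ ^ 2 := by
  have h := congrFun (congrFun hA.1 2) 2
  simp [mul_apply, Fin.sum_univ_three, J21, mul_conj'] at h
  exact_mod_cast (by linear_combination h :
    (‖A 2 2‖ : ℂ) ^ 2 = 1 + (‖A 2 0‖ : ℂ) ^ 2 + (‖A 2 1‖ : ℂ) ^ 2)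

theorem norm_sq_col_two (hA : inU21 A) :
    ‖A 2 2‖ ^ 2 = 1 + ‖A 0 2‖ ^ 2 + ‖A 1 2‖ ^ 2 := by
  have h := congrFun (congrFun hA.2 2) 2
  simp [mul_apply, Fin.sum_univ_three, J21, conj_mul'] at h
  exact_mod_cast (by linear_combination h :
    (‖A 2 2‖ : ℂ) ^ 2 = 1 + (‖A 0 2‖ : ℂ) ^ 2 + (‖A 1 2‖ : ℂ) ^ 2)

end inU21

theorem stmt8 (A B : Matrix (Fin 3) (Fin 3) ℂ) (hA : inU21 A) (hB : inU21 B) :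
    0 < (1 + (A 2 0 * B 0 2 + A 2 1 * B 1 2) / (A 2 2 * B 2 2)).re ∧
      ‖A 2 0 * B 0 2 + A 2 1 * B 1 2‖ < ‖A 2 2 * B 2 2‖ := by
  have hlt : ‖A 2 0 * B 0 2 + A 2 1 * B 1 2‖ < ‖A 2 2 * B 2 2‖ :=
    calc ‖A 2 0 * B 0 2 + A 2 1 * B 1 2‖
        ≤ ‖A 2 0‖ * ‖B 0 2‖ + ‖A 2 1‖ * ‖B 1 2‖ := by
          simpa only [norm_mul] using norm_add_le (A 2 0 * B 0 2) (A 2 1 * B 1 2)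
      _ < ‖A 2 2‖ * ‖B 2 2‖ :=
          mul_add_mul_lt_mul_of_sq_eq_one_add hA.norm_sq_row_two hB.norm_sq_col_two
            (norm_nonneg _) (norm_nonneg _)
      _ = ‖A 2 2 * B 2 2‖ := (norm_mul _ _).symm
  exact ⟨re_one_add_div_pos_of_norm_lt hlt, hlt⟩
end
end
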